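/- arXiv:1603.05429 — 3 statements merged into one kernel-verified Lean document; each statement's English description precedes it below -/
import Mathlib

section
/- For all positive integers n, k and q with q ≥ 3·n^{2^k/(2^k−1)}, Waiter has a strategy in the Client-Waiter game with bias q played on the board E(K_n) guaranteeing that Client's final graph contains no path with 2k edges; in other words, P(n,q) < 2k. -/
open Finset

variable {α : Type*}

/-- Auxiliary definition: `fuel` bounds the number of remaining rounds; `C` is the set of
elements claimed by Client so far; `F` is the set of free (unclaimed) elements.
`ClientCanAux q P fuel C F` says that Client can guarantee that his final claimed set
satisfies `P` in the Client-Waiter game with bias `q`: in each round Waiter offers a set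
`O` of at least one and at most `q+1` free elements, Client claims one element of `O`,
and Waiter claims the rest. -/
def ClientCanAux [DecidableEq α] (q : ℕ) (P : Finset α → Prop) :
    ℕ → Finset α → Finset α → Prop
  | 0, C, F => F = ∅ ∧ P C
  | fuel + 1, C, F =>
    if F = ∅ then P C
    else ∀ O ⊆ F, O.Nonempty → O.card ≤ q + 1 →
      ∃ x ∈ O, ClientCanAux q P fuel (insert x C) (F \ O)

/-- Client has a strategy in the Client-Waiter game with bias `q` on the board `X`
guaranteeing that the set of elements he has claimed at the end of the game satisfies `P`. -/
def ClientCanForce [DecidableEq α] (X : Finset α) (q : ℕ) (P : Finset α → Prop) : Prop :=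
  ClientCanAux q P X.card ∅ X

/-- Analogue of `ClientCanAux` for Waiter. -/
def WaiterCanAux [DecidableEq α] (q : ℕ) (P : Finset α → Prop) :
    ℕ → Finset α → Finset α → Prop
  | 0, C, F => F = ∅ ∧ P C
  | fuel + 1, C, F =>
    if F = ∅ then P C
    else ∃ O ⊆ F, O.Nonempty ∧ O.card ≤ q + 1 ∧
      ∀ x ∈ O, WaiterCanAux q P fuel (insert x C) (F \ O)

/-- Waiter has a strategy in the Client-Waiter game with bias `q` on the board `X`
guaranteeing that the set of elements claimed by Client at the end of the game
satisfies `P`. -/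
def WaiterCanForce [DecidableEq α] (X : Finset α) (q : ℕ) (P : Finset α → Prop) : Prop :=
  WaiterCanAux q P X.card ∅ X

/-- Client's graph: the graph whose edges are the edges claimed by Client. -/
def clientGraph {V : Type*} (C : Finset (Sym2 V)) : SimpleGraph V :=
  SimpleGraph.fromEdgeSet (↑C)

/-- The board for games played on `K_n`: the edge set of the complete graph on `n` vertices. -/
def Kboard (n : ℕ) : Finset (Sym2 (Fin n)) :=
  (⊤ : SimpleGraph (Fin n)).edgeFinset

/-- `G` contains a copy of `H`. -/
def ContainsCopy {W V : Type*} (H : SimpleGraph W) (G : SimpleGraph V) : Prop :=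
  ∃ f : W → V, Function.Injective f ∧ ∀ ⦃a b : W⦄, H.Adj a b → G.Adj (f a) (f b)

/-- The 2-density `d₂(H)` of a graph `H`. -/
noncomputable def twoDensity {β : Type*} (H : SimpleGraph β) : ℝ :=
  if 3 ≤ Nat.card β then ((H.edgeSet.ncard : ℝ) - 1) / ((Nat.card β : ℝ) - 2) else 0

/-- The maximum 2-density `m₂(H)` of a graph `H`. -/
noncomputable def maxTwoDensity {β : Type*} (H : SimpleGraph β) : ℝ :=
  sSup {x : ℝ | ∃ H' : H.Subgraph, 3 ≤ H'.verts.ncard ∧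
    x = ((H'.edgeSet.ncard : ℝ) - 1) / ((H'.verts.ncard : ℝ) - 2)}

/-- The maximum density `m(G)` of a graph `G`. -/
noncomputable def maxDensity {β : Type*} (G : SimpleGraph β) : ℝ :=
  sSup {x : ℝ | ∃ G' : G.Subgraph, G'.verts.Nonempty ∧
    x = (G'.edgeSet.ncard : ℝ) / (G'.verts.ncard : ℝ)}

/-- The arboricity `ar(G)` of a graph `G`. -/
noncomputable def arboricity {β : Type*} (G : SimpleGraph β) : ℝ :=
  sSup {x : ℝ | ∃ G' : G.Subgraph, 2 ≤ G'.verts.ncard ∧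
    x = (G'.edgeSet.ncard : ℝ) / ((G'.verts.ncard : ℝ) - 1)}

/-- `H` is strictly 2-balanced: every proper subgraph with at least 3 vertices has
strictly smaller 2-density. -/
def StrictlyTwoBalanced {β : Type*} (H : SimpleGraph β) : Prop :=
  ∀ H' : H.Subgraph, H' ≠ ⊤ → 3 ≤ H'.verts.ncard → twoDensity H'.coe < twoDensity H

open Classical in
/-- The probability that Client has a winning strategy in the `H`-game `CW(G_{n,p}, H, q)`,
where the random graph `G_{n,p}` is generated by keeping each edge of `K_n` independently
with probability `p`. -/
noncomputable def probClientWinsHGame {β : Type*} (H : SimpleGraph β) (q n : ℕ) (p : ℝ) : ℝ :=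
  ∑ E ∈ (Kboard n).powerset,
    p ^ E.card * (1 - p) ^ ((Kboard n).card - E.card) *
      (if ClientCanForce E q (fun C => ContainsCopy H (clientGraph C)) then 1 else 0)

/-- Vertices of the complete `k`-ary rooted tree of height `k`: a vertex at depth `i ≤ k`
is a sequence of `i` choices among `k` children. -/
abbrev TreeVert (k : ℕ) : Type := (i : Fin (k + 1)) × (Fin (i : ℕ) → Fin k)

/-- `u` is a child of `v` in the complete `k`-ary tree. -/
def IsChildOf {k : ℕ} (u v : TreeVert k) : Prop :=
  ∃ h : (u.1 : ℕ) = (v.1 : ℕ) + 1,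
    ∀ t : Fin (v.1 : ℕ), u.2 ⟨t.1, by have := t.2; omega⟩ = v.2 t

/-- The complete `k`-ary tree of height `k`, `T_{k,k}`. -/
def Tkk (k : ℕ) : SimpleGraph (TreeVert k) where
  Adj u v := IsChildOf u v ∨ IsChildOf v u
  symm := by constructor; intro u v h; tauto
  loopless := by
    constructor
    intro u h
    rcases h with ⟨h, _⟩ | ⟨h, _⟩ <;> omega

/-!
Induction on `k`. For `k = 1` the bias exceeds the number of edges, so Waiter offers the
whole board at once. For `k ≥ 2` let `s = ⌊(q + 1) / n⌋`. In the main phase Waiter repeatedly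
takes `s` vertices `Z` of the current vertex set `U` that no edge of Client touches and offers
every edge of `K_U` meeting `Z`; the endpoint `z ∈ Z` of Client's edge `zw` leaves `U` and
never receives another edge. Once every vertex of `U` is touched, at most `n / s + 1` vertices
remain, and Waiter plays the strategy for `k - 1` on `K_U`. The main-phase edges hang off `U`
by pendant vertices, so they can only be the first or the last edge of a path of Client; the
rest of the path lies in `K_U`, hence has fewer than `2k - 2` edges.
-/

section Game

variable [DecidableEq α] {q : ℕ} {P P' : Finset α → Prop}

theorem WaiterCanAux.mono_fuel :
    ∀ {f g : ℕ} {C F : Finset α}, f ≤ g → WaiterCanAux q P f C F → WaiterCanAux q P g C F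
  | 0, 0, _, _, _, h => h
  | 0, _ + 1, _, _, _, ⟨hF, hP⟩ => by simpa [WaiterCanAux, hF] using hP
  | _ + 1, _ + 1, _, _, hfg, h => by
    unfold WaiterCanAux at h ⊢
    split_ifs at h ⊢
    · exact h
    · obtain ⟨O, hOF, hO, hOq, hx⟩ := h
      exact ⟨O, hOF, hO, hOq, fun x hxO => mono_fuel (by omega) (hx x hxO)⟩

theorem WaiterCanAux.union_left {B C₀ : Finset α} (hP : ∀ C ⊆ B, P C → P' (C₀ ∪ C)) :
    ∀ {f : ℕ} {C F : Finset α}, C ∪ F ⊆ B → WaiterCanAux q P f C F →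
      WaiterCanAux q P' f (C₀ ∪ C) F
  | 0, C, _, hB, ⟨rfl, hPC⟩ => ⟨rfl, hP C (by simpa using hB) hPC⟩
  | _ + 1, C, F, hB, h => by
    unfold WaiterCanAux at h ⊢
    split_ifs at h ⊢
    · exact hP C (subset_union_left.trans hB) h
    · obtain ⟨O, hOF, hO, hOq, hx⟩ := h
      refine ⟨O, hOF, hO, hOq, fun x hxO =>
        union_insert x C₀ C ▸ union_left hP ?_ (hx x hxO)⟩
      have hx : x ∈ F := hOF hxO
      intro y
      simp only [mem_union, mem_insert, mem_sdiff]
      rintro ((rfl | hy) | ⟨hy, -⟩) <;> exact hB (by simp [*])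

def WaiterCanForceFrom (q : ℕ) (P : Finset α → Prop) (C F : Finset α) : Prop :=
  WaiterCanAux q P F.card C F

theorem WaiterCanForceFrom.union_left {C F : Finset α}
    (h : WaiterCanForceFrom q P ∅ F) (hP : ∀ E ⊆ F, P E → P' (C ∪ E)) :
    WaiterCanForceFrom q P' C F := by
  have := WaiterCanAux.union_left (B := F) (C₀ := C) hP (by rw [empty_union]) h
  rwa [union_empty] at this

theorem waiterCanForceFrom_empty {C : Finset α} (h : P C) : WaiterCanForceFrom q P C ∅ :=
  ⟨rfl, h⟩

theorem waiterCanForceFrom_of_offer {C F O : Finset α} (hOF : O ⊆ F) (hO : O.Nonempty)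
    (hOq : #O ≤ q + 1) (h : ∀ x ∈ O, WaiterCanForceFrom q P (insert x C) (F \ O)) :
    WaiterCanForceFrom q P C F := by
  obtain ⟨m, hm⟩ : ∃ m, #F = m + 1 := Nat.exists_eq_add_one.2 (hO.mono hOF).card_pos
  have hFm : #(F \ O) ≤ m := by
    rw [card_sdiff_of_subset hOF]; have := hO.card_pos; omega
  unfold WaiterCanForceFrom
  rw [hm, WaiterCanAux, if_neg (hO.mono hOF).ne_empty]
  exact ⟨O, hOF, hO, hOq, fun x hx => (h x hx).mono_fuel hFm⟩

theorem waiterCanForceFrom_of_card_le {C F : Finset α} (hF : #F ≤ q + 1) (hC : P C)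
    (hx : ∀ x ∈ F, P (insert x C)) : WaiterCanForceFrom q P C F := by
  rcases F.eq_empty_or_nonempty with rfl | hne
  · exact waiterCanForceFrom_empty hC
  · refine waiterCanForceFrom_of_offer subset_rfl hne hF fun x hxF => ?_
    rw [sdiff_self]
    exact waiterCanForceFrom_empty (hx x hxF)

end Game

namespace SimpleGraph

variable {V : Type*}

def PathsShorter (G : SimpleGraph V) (L : ℕ) : Prop :=
  ∀ (u v : V) (p : G.Walk u v), p.IsPath → p.length < L

namespace Walk

variable {G : SimpleGraph V}

theorem IsPath.not_subsingleton_neighborSet_getVert {u v : V} {p : G.Walk u v} (hp : p.IsPath)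
    {i : ℕ} (hi0 : i ≠ 0) (hi : i < p.length) :
    ¬ (G.neighborSet (p.getVert i)).Subsingleton := by
  intro hsub
  have hprev : G.Adj (p.getVert i) (p.getVert (i - 1)) := by
    simpa [Nat.sub_add_cancel (Nat.one_le_iff_ne_zero.2 hi0)] using
      (p.adj_getVert_succ (i := i - 1) (by omega)).symm
  have := hp.getVert_injOn (show i - 1 ≤ p.length by omega) (show i + 1 ≤ p.length by omega)
    (hsub hprev (p.adj_getVert_succ hi))
  omega

theorem exists_getVert_eq_of_mem_support_tail_dropLast {u v x : V} {p : G.Walk u v}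
    (hp : 2 ≤ p.length) (hx : x ∈ p.tail.dropLast.support) :
    ∃ i, p.getVert i = x ∧ i ≠ 0 ∧ i < p.length := by
  obtain ⟨n, rfl, hn⟩ := mem_support_iff_exists_getVert.1 hx
  rw [length_dropLast, length_tail] at hn
  refine ⟨n + 1, ?_, by omega, by omega⟩
  rw [getVert_dropLast (by rw [length_tail]; omega), getVert_tail]

end Walk

end SimpleGraph

open SimpleGraph

section ClientGraph

variable {V : Type*} [DecidableEq V]

theorem clientGraph_pathsShorter_of_card_lt {D : Finset (Sym2 V)} {L : ℕ} (h : #D < L) :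
    (clientGraph D).PathsShorter L := by
  intro u v p hp
  have hsub : p.edges.toFinset ⊆ D := fun e he => by
    have := p.edges_subset_edgeSet (List.mem_toFinset.1 he)
    rw [clientGraph, edgeSet_fromEdgeSet] at this
    exact this.1
  calc p.length = #p.edges.toFinset := by
        rw [List.toFinset_card_of_nodup hp.edges_nodup, Walk.length_edges]
    _ ≤ #D := card_le_card hsub
    _ < L := h

def cliqueEdges (S : Finset V) : Finset (Sym2 V) :=
  {e ∈ S.sym2 | ¬ e.IsDiag}

theorem mem_cliqueEdges {S : Finset V} {e : Sym2 V} :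
    e ∈ cliqueEdges S ↔ (∀ v ∈ e, v ∈ S) ∧ ¬ e.IsDiag := by
  simp [cliqueEdges, mem_sym2_iff]

theorem cliqueEdges_mono {U S : Finset V} (h : U ⊆ S) : cliqueEdges U ⊆ cliqueEdges S :=
  filter_subset_filter _ (sym2_mono h)

theorem card_cliqueEdges_le (S : Finset V) : #(cliqueEdges S) ≤ #S * #S := by
  calc #(cliqueEdges S) ≤ #S.sym2 := card_filter_le _ _
    _ ≤ #(S ×ˢ S) := by rw [sym2_eq_image]; exact card_image_le
    _ = #S * #S := card_product _ _

theorem kboard_eq_cliqueEdges (n : ℕ) : Kboard n = cliqueEdges (univ : Finset (Fin n)) := by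
  ext e
  induction e with
  | _ a b => simp [Kboard, mem_cliqueEdges]

def coveredVerts (D : Finset (Sym2 V)) : Finset V :=
  D.biUnion Sym2.toFinset

theorem mem_coveredVerts {D : Finset (Sym2 V)} {v : V} :
    v ∈ coveredVerts D ↔ ∃ e ∈ D, v ∈ e := by
  simp [coveredVerts]

def PendantOutside (U : Finset V) (D : Finset (Sym2 V)) : Prop :=
  ∀ e ∈ D, ∃ v ∈ e, v ∉ U ∧ ∀ e' ∈ D, v ∈ e' → e' = e

theorem PendantOutside.insert {U U' : Finset V} {D : Finset (Sym2 V)} {z w : V}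
    (hD : PendantOutside U D) (hU' : U' ⊆ U) (hz : z ∉ coveredVerts D) (hzU' : z ∉ U')
    (hw : w ∈ U) : PendantOutside U' (insert s(z, w) D) := by
  intro e he
  rcases mem_insert.1 he with rfl | heD
  · refine ⟨z, Sym2.mem_mk_left z w, hzU', fun e' he' hze' => ?_⟩
    rcases mem_insert.1 he' with rfl | he'
    · rfl
    · exact absurd (mem_coveredVerts.2 ⟨e', he', hze'⟩) hz
  · obtain ⟨v, hve, hvU, hv⟩ := hD e heD
    refine ⟨v, hve, fun h => hvU (hU' h), fun e' he' hve' => ?_⟩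
    rcases mem_insert.1 he' with rfl | he'
    · rcases Sym2.mem_iff.1 hve' with rfl | rfl
      · exact absurd (mem_coveredVerts.2 ⟨e, heD, hve⟩) hz
      · exact absurd hw hvU
    · exact hv e' he' hve'

theorem subsingleton_neighborSet_clientGraph_union {U : Finset V} {D D₂ : Finset (Sym2 V)}
    {e : Sym2 V} {v : V} (hvU : v ∉ U) (hv : ∀ e' ∈ D, v ∈ e' → e' = e)
    (hD₂ : D₂ ⊆ cliqueEdges U) : ((clientGraph (D ∪ D₂)).neighborSet v).Subsingleton := by
  have hedge : ∀ y, (clientGraph (D ∪ D₂)).Adj v y → s(v, y) = e := by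
    intro y hy
    simp only [clientGraph, fromEdgeSet_adj, coe_union, Set.mem_union, mem_coe] at hy
    rcases hy.1 with h | h
    · exact hv _ h (Sym2.mem_mk_left v y)
    · exact absurd ((mem_cliqueEdges.1 (hD₂ h)).1 v (Sym2.mem_mk_left v y)) hvU
  intro y hy y' hy'
  exact Sym2.congr_right.1 ((hedge y hy).trans (hedge y' hy').symm)

/-- Removing the first and the last edge of a path in `D ∪ D₂` leaves a path in `D₂`: an edge
of `D` in the middle would put its pendant vertex in the interior of the path. -/
theorem PendantOutside.pathsShorter_union {U : Finset V} {D D₂ : Finset (Sym2 V)} {L : ℕ}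
    (hD : PendantOutside U D) (hD₂ : D₂ ⊆ cliqueEdges U)
    (h : (clientGraph D₂).PathsShorter L) : (clientGraph (D ∪ D₂)).PathsShorter (L + 2) := by
  intro a b p hp
  by_contra! hlen
  have hmid : ∀ e ∈ p.tail.dropLast.edges, e ∈ (clientGraph D₂).edgeSet := by
    intro e he
    have hep := (Walk.isSubwalk_rfl p).tail.dropLast.edges_subset he
    have hpe := p.edges_subset_edgeSet hep
    simp only [clientGraph, edgeSet_fromEdgeSet, Set.mem_sdiff, coe_union, Set.mem_union,
      mem_coe] at hpe ⊢
    refine ⟨hpe.1.resolve_left fun heD => ?_, hpe.2⟩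
    obtain ⟨v, hve, hvU, hv⟩ := hD e heD
    obtain ⟨i, rfl, hi0, hi⟩ := Walk.exists_getVert_eq_of_mem_support_tail_dropLast (by omega)
      (Walk.mem_support_of_mem_edges he hve)
    exact hp.not_subsingleton_neighborSet_getVert hi0 hi
      (subsingleton_neighborSet_clientGraph_union hvU hv hD₂)
  have := h _ _ (p.tail.dropLast.transfer _ hmid) (hp.tail.dropLast.transfer _)
  rw [Walk.length_transfer, Walk.length_dropLast, Walk.length_tail] at this
  omega

end ClientGraph

section MainPhase

variable {V : Type*} [DecidableEq V]

theorem exists_eq_mk_of_mem_cliqueEdges_sdiff {U Z : Finset V} {x : Sym2 V}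
    (hx : x ∈ cliqueEdges U \ cliqueEdges (U \ Z)) : ∃ z ∈ Z, ∃ w ∈ U, x = s(z, w) := by
  obtain ⟨hxU, hxUZ⟩ := mem_sdiff.1 hx
  induction x with
  | _ a b =>
    have ha := (mem_cliqueEdges.1 hxU).1 a (Sym2.mem_mk_left a b)
    have hb := (mem_cliqueEdges.1 hxU).1 b (Sym2.mem_mk_right a b)
    by_cases haZ : a ∈ Z
    · exact ⟨a, haZ, b, hb, rfl⟩
    by_cases hbZ : b ∈ Z
    · exact ⟨b, hbZ, a, ha, Sym2.eq_swap⟩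
    refine absurd (mem_cliqueEdges.2 ⟨fun v hv => ?_, (mem_cliqueEdges.1 hxU).2⟩) hxUZ
    rcases Sym2.mem_iff.1 hv with rfl | rfl <;> simp [*]

theorem mk_mem_cliqueEdges_sdiff {U Z : Finset V} {z w : V} (hz : z ∈ Z) (hzU : z ∈ U)
    (hw : w ∈ U) (hzw : z ≠ w) : s(z, w) ∈ cliqueEdges U \ cliqueEdges (U \ Z) := by
  simp only [mem_sdiff, mem_cliqueEdges, Sym2.mem_iff, Sym2.mk_isDiag_iff, forall_eq_or_imp,
    forall_eq]
  tauto

theorem card_cliqueEdges_sdiff_le (U Z : Finset V) :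
    #(cliqueEdges U \ cliqueEdges (U \ Z)) ≤ #Z * #U := by
  have hsub : cliqueEdges U \ cliqueEdges (U \ Z) ⊆ (Z ×ˢ U).image Sym2.mk.uncurry := by
    intro x hx
    obtain ⟨z, hz, w, hw, rfl⟩ := exists_eq_mk_of_mem_cliqueEdges_sdiff hx
    exact mem_image.2 ⟨(z, w), mem_product.2 ⟨hz, hw⟩, rfl⟩
  exact (card_le_card hsub).trans (card_image_le.trans (card_product Z U).le)

def mainPhasePotential (s : ℕ) (U : Finset V) (D : Finset (Sym2 V)) : ℕ :=
  s * #(U ∩ coveredVerts D) + #(U \ coveredVerts D)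

/-- A round removes `s` untouched vertices and touches at most one new vertex, or removes all
the remaining untouched vertices. -/
theorem mainPhasePotential_round_le {s : ℕ} {U Z : Finset V} {D : Finset (Sym2 V)} {z w : V}
    (hZ : Z ⊆ U \ coveredVerts D) (hZcard : #Z = min s #(U \ coveredVerts D)) (hz : z ∈ Z)
    (hw : w ∈ U) :
    mainPhasePotential s (U \ Z) (insert s(z, w) D) ≤ mainPhasePotential s U D := by
  unfold mainPhasePotential
  set V₀ := coveredVerts D
  have hcov : ∀ v, v ∈ coveredVerts (insert s(z, w) D) ↔ v = z ∨ v = w ∨ v ∈ V₀ := by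
    simp [V₀, coveredVerts, or_assoc]
  have hfresh : #((U \ Z) \ coveredVerts (insert s(z, w) D)) + #Z ≤ #(U \ V₀) := by
    rw [← card_union_of_disjoint (disjoint_left.2 fun v hv => (mem_sdiff.1 (mem_sdiff.1 hv).1).2)]
    refine card_le_card (union_subset (fun v hv => ?_) hZ)
    simp only [mem_sdiff, hcov, not_or] at hv ⊢
    exact ⟨hv.1.1, hv.2.2.2⟩
  rcases le_total s #(U \ V₀) with hs | hs
  · have htouched : #((U \ Z) ∩ coveredVerts (insert s(z, w) D)) ≤ #(U ∩ V₀) + 1 := by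
      refine (card_le_card fun v hv => ?_).trans (card_insert_le w _)
      simp only [mem_inter, mem_sdiff, hcov, mem_insert] at hv ⊢
      rcases hv with ⟨⟨hvU, hvZ⟩, rfl | rfl | hv⟩
      · exact absurd hz hvZ
      · exact Or.inl rfl
      · exact Or.inr ⟨hvU, hv⟩
    rw [min_eq_left hs] at hZcard
    have := Nat.mul_le_mul_left s htouched
    rw [Nat.mul_add_one] at this
    omega
  · rw [min_eq_right hs] at hZcard
    have hZeq : Z = U \ V₀ := eq_of_subset_of_card_le hZ hZcard.ge
    have htouched : (U \ Z) ∩ coveredVerts (insert s(z, w) D) ⊆ U ∩ V₀ := by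
      intro v hv
      have hvU := (mem_sdiff.1 (mem_inter.1 hv).1)
      rw [hZeq, mem_sdiff, not_and, not_not] at hvU
      exact mem_inter.2 ⟨hvU.1, hvU.2 hvU.1⟩
    have := Nat.mul_le_mul_left s (card_le_card htouched)
    omega

theorem waiterCanForceFrom_mainPhase {q s N L : ℕ} (hs : 0 < s)
    (hend : ∀ U : Finset V, s * #U ≤ N + s →
      WaiterCanForce (cliqueEdges U) q (fun E => (clientGraph E).PathsShorter L))
    (U : Finset V) (D : Finset (Sym2 V)) (hsU : s * #U ≤ q + 1) (hD : PendantOutside U D)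
    (hpot : mainPhasePotential s U D ≤ N + s) :
    WaiterCanForceFrom q (fun E => (clientGraph E).PathsShorter (L + 2)) D (cliqueEdges U) := by
  induction U using Finset.strongInduction generalizing D with
  | H U ih =>
  by_cases hstop : U \ coveredVerts D = ∅ ∨ #U ≤ 1
  · have hU : s * #U ≤ N + s := by
      rcases hstop with h | h
      · rw [mainPhasePotential, h, inter_eq_left.2 (sdiff_eq_empty_iff_subset.1 h)] at hpot
        simpa using hpot
      · exact (Nat.mul_le_mul_left s h).trans (by omega)
    exact WaiterCanForceFrom.union_left (hend U hU) fun E hE hL => hD.pathsShorter_union hE hL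
  obtain ⟨hfresh, hU⟩ := not_or.1 hstop
  obtain ⟨Z, hZ, hZcard⟩ := exists_subset_card_eq (min_le_right s #(U \ coveredVerts D))
  obtain ⟨z₀, hz₀⟩ : Z.Nonempty := by
    rw [← card_pos, hZcard]
    exact lt_min hs (card_pos.2 (nonempty_iff_ne_empty.2 hfresh))
  have hZU : Z ⊆ U := hZ.trans sdiff_subset
  obtain ⟨w₀, hw₀, hw₀z₀⟩ := exists_mem_ne (show 1 < #U by omega) z₀
  refine waiterCanForceFrom_of_offer sdiff_subset
    ⟨_, mk_mem_cliqueEdges_sdiff hz₀ (hZU hz₀) hw₀ hw₀z₀.symm⟩ ?_ fun x hx => ?_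
  · calc #(cliqueEdges U \ cliqueEdges (U \ Z)) ≤ #Z * #U := card_cliqueEdges_sdiff_le U Z
      _ ≤ s * #U := Nat.mul_le_mul_right _ (hZcard ▸ min_le_left _ _)
      _ ≤ q + 1 := hsU
  · obtain ⟨z, hz, w, hw, rfl⟩ := exists_eq_mk_of_mem_cliqueEdges_sdiff hx
    rw [Finset.sdiff_sdiff_eq_self (cliqueEdges_mono sdiff_subset)]
    exact ih (U \ Z) (sdiff_ssubset hZU ⟨z, hz⟩) _
      ((Nat.mul_le_mul_left s (card_le_card sdiff_subset)).trans hsU)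
      (hD.insert sdiff_subset (mem_sdiff.1 (hZ hz)).2 (fun h => (mem_sdiff.1 h).2 hz) hw)
      ((mainPhasePotential_round_le hZ hZcard hz hw).trans hpot)

end MainPhase

section Level

variable {V : Type*} [DecidableEq V]

theorem two_le_two_pow {k : ℕ} (hk : 1 ≤ k) : (2 : ℝ) ≤ 2 ^ k := by
  simpa using pow_le_pow_right₀ one_le_two hk

noncomputable def pathExponent (k : ℕ) : ℝ :=
  2 ^ k / (2 ^ k - 1)

theorem one_le_pathExponent {k : ℕ} (hk : 1 ≤ k) : 1 ≤ pathExponent k := by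
  have := two_le_two_pow hk
  rw [pathExponent, le_div_iff₀ (by linarith)]
  linarith

/-- The exponent of the number of vertices left over by the main phase at level `k + 1`. -/
noncomputable def leftoverExponent (k : ℕ) : ℝ :=
  (2 ^ (k + 1) - 2) / (2 ^ (k + 1) - 1)

theorem leftoverExponent_le_one (k : ℕ) : leftoverExponent k ≤ 1 := by
  rw [leftoverExponent, div_le_one (by linarith [two_le_two_pow (Nat.le_add_left 1 k)])]
  linarith

theorem pathExponent_succ_add_leftoverExponent (k : ℕ) :
    pathExponent (k + 1) + leftoverExponent k = 2 := by
  rw [pathExponent, leftoverExponent, ← add_div,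
    div_eq_iff (by linarith [two_le_two_pow (Nat.le_add_left 1 k)])]
  ring

theorem leftoverExponent_mul_pathExponent {k : ℕ} (hk : 1 ≤ k) :
    leftoverExponent k * pathExponent k = pathExponent (k + 1) := by
  have := two_le_two_pow hk
  have h1 : (2 : ℝ) ^ k - 1 ≠ 0 := by linarith
  have h2 : (2 : ℝ) ^ k * 2 - 1 ≠ 0 := by linarith
  rw [leftoverExponent, pathExponent, pathExponent, pow_succ]
  field_simp

/-- With `X = σ ^ leftoverExponent k`, the bias bound gives `3σ² ≤ qX`, so a main phase with
`s ≈ q / σ` leaves at most `X` vertices, and `3 X ^ pathExponent k ≤ q`. -/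
theorem three_mul_rpow_pathExponent_le {k σ q s m : ℕ} (hk : 1 ≤ k) (hσ : 0 < σ)
    (hq : 3 * (σ : ℝ) ^ pathExponent (k + 1) ≤ q) (hs : q + 2 ≤ s * σ + σ)
    (hm : s * m ≤ σ + s) : 3 * (m : ℝ) ^ pathExponent k ≤ q := by
  have hσ1 : (1 : ℝ) ≤ σ := by exact_mod_cast hσ
  set X : ℝ := (σ : ℝ) ^ leftoverExponent k
  have hX0 : 0 ≤ X := by positivity
  have hXσ : X ≤ σ :=
    (Real.rpow_le_rpow_of_exponent_le hσ1 (leftoverExponent_le_one k)).trans_eq (Real.rpow_one _)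
  have hσσ : (σ : ℝ) ^ pathExponent (k + 1) * X = σ * σ := by
    rw [← Real.rpow_add (by linarith), pathExponent_succ_add_leftoverExponent, Real.rpow_two, sq]
  have hq3 : (3 : ℝ) ≤ q := by
    have := Real.one_le_rpow hσ1 (zero_le_one.trans (one_le_pathExponent (k := k + 1) (by omega)))
    linarith
  have hexp : 0 ≤ pathExponent k := zero_le_one.trans (one_le_pathExponent hk)
  rcases Nat.lt_or_ge m 2 with hm2 | hm2
  · have : (m : ℝ) ^ pathExponent k ≤ 1 :=
      Real.rpow_le_one (by positivity) (by exact_mod_cast Nat.lt_succ_iff.1 hm2) hexp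
    linarith
  have hsm : (s : ℝ) * m ≤ 2 * σ := by exact_mod_cast (by nlinarith : s * m ≤ 2 * σ)
  have hsX : 2 * (σ : ℝ) ≤ s * X := by
    have hqR : (q : ℝ) + 2 ≤ s * σ + σ := by exact_mod_cast hs
    have : 3 * ((σ : ℝ) * σ) ≤ (s * σ + σ) * X := by
      rw [← hσσ]; nlinarith
    nlinarith
  have hmX : (m : ℝ) ≤ X := by
    have hs0 : (0 : ℝ) < s := by nlinarith
    nlinarith
  calc 3 * (m : ℝ) ^ pathExponent k ≤ 3 * X ^ pathExponent k := by gcongr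
    _ = 3 * (σ : ℝ) ^ pathExponent (k + 1) := by
      rw [← Real.rpow_mul (by linarith), leftoverExponent_mul_pathExponent hk]
    _ ≤ q := hq

theorem waiterCanForce_cliqueEdges_pathsShorter_of_card_le {S : Finset V} {q L : ℕ}
    (hS : #S * #S ≤ q + 1) (hL : 2 ≤ L) :
    WaiterCanForce (cliqueEdges S) q (fun E => (clientGraph E).PathsShorter L) :=
  waiterCanForceFrom_of_card_le ((card_cliqueEdges_le S).trans hS)
    (clientGraph_pathsShorter_of_card_lt (by rw [card_empty]; omega))
    fun _ _ => clientGraph_pathsShorter_of_card_lt (by rw [insert_empty, card_singleton]; omega)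

theorem waiterCanForce_cliqueEdges_pathsShorter {k : ℕ} (hk : 1 ≤ k) :
    ∀ {q : ℕ} (S : Finset V), 3 * (#S : ℝ) ^ pathExponent k ≤ q →
      WaiterCanForce (cliqueEdges S) q (fun E => (clientGraph E).PathsShorter (2 * k)) := by
  induction k, hk using Nat.le_induction with
  | base =>
    intro q S hq
    have hq' : 3 * ((#S : ℝ) * #S) ≤ q := by
      convert hq using 2
      norm_num [pathExponent, ← sq]
    refine waiterCanForce_cliqueEdges_pathsShorter_of_card_le ?_ le_rfl
    have : #S * #S ≤ q := by exact_mod_cast (by nlinarith : (#S : ℝ) * #S ≤ q)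
    omega
  | succ k hk ih =>
    intro q S hq
    rcases S.eq_empty_or_nonempty with rfl | hS
    · exact waiterCanForce_cliqueEdges_pathsShorter_of_card_le (by simp) (by omega)
    have hσ := hS.card_pos
    have hσq : #S ≤ q := by
      have hσ1 : (1 : ℝ) ≤ #S := by exact_mod_cast hσ
      have := Real.self_le_rpow_of_one_le hσ1 (one_le_pathExponent (k := k + 1) (by omega))
      exact_mod_cast (by linarith : (#S : ℝ) ≤ q)
    have hdiv := Nat.div_add_mod' (q + 1) #S
    have hmod := Nat.mod_lt (q + 1) hσ
    exact waiterCanForceFrom_mainPhase (N := #S) (Nat.div_pos (by omega) hσ)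
      (fun U hU => ih U (three_mul_rpow_pathExponent_le hk hσ hq (by omega) hU)) S ∅
      (Nat.div_mul_le_self _ _) (fun _ he => absurd he (notMem_empty _))
      (by simp [mainPhasePotential, coveredVerts])

end Level

theorem stmt5_general (n k q : ℕ) (hk : 0 < k)
    (h : 3 * (n : ℝ) ^ ((2 : ℝ) ^ k / ((2 : ℝ) ^ k - 1)) ≤ (q : ℝ)) :
    WaiterCanForce (Kboard n) q
      (fun C => ∀ (u v : Fin n) (p : (clientGraph C).Walk u v), p.IsPath →
        p.length < 2 * k) := by
  rw [kboard_eq_cliqueEdges]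
  exact waiterCanForce_cliqueEdges_pathsShorter hk univ (by simpa [pathExponent] using h)

/-- Theorem 3(i): if `q ≥ 3 n^{2^k/(2^k-1)}` then `P(n,q) < 2k`: Waiter can ensure that
Client's final graph contains no path with `2k` edges. -/
theorem stmt5 (n k q : ℕ) (hn : 0 < n) (hk : 0 < k) (hq : 0 < q)
    (h : 3 * (n : ℝ) ^ ((2 : ℝ) ^ k / ((2 : ℝ) ^ k - 1)) ≤ (q : ℝ)) :
    WaiterCanForce (Kboard n) q
      (fun C => ∀ (u v : Fin n) (p : (clientGraph C).Walk u v), p.IsPath →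
        p.length < 2 * k) :=
  stmt5_general n k q hk h
end

section
/- There exists n₀ such that for every integer n ≥ n₀ and every positive integer q with q ≥ n, Waiter has a strategy in the Client-Waiter game with bias q played on the board E(K_n) guaranteeing that Client's final graph contains no path with at least 3·ln ln n edges; in other words, P(n,q) < 3·ln ln n. -/
open Finset

variable {α : Type*}

/-!
Waiter keeps a set `X` of live vertices such that the free edges are exactly those inside `X`.
In each round he offers all free edges meeting a batch `S` of live vertices; whichever edge
`s(a, b)` Client takes (`a ∈ S`), the vertex `a` becomes a child of `b` and the whole batch dies.
So Client's graph is a forest in which a vertex gets its parent when it dies, and a path climbs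
and then descends: its length is at most twice the height of the forest.

In phase `i` the batches have size `fᵢ`, where `f₀ = 1` and `fᵢ₊₁ = fᵢ (fᵢ + 1)`. A live vertex
that received a child is not put into a batch again during the same phase, so heights grow by
one per phase, while every phase shrinks `X` by the factor `fᵢ + 1`; an offer has at most
`fᵢ |X| ≤ n` edges. As `fᵢ₊₁ ≥ 2 ^ 2 ^ i`, there are at most `log₂ log₂ n + 1` phases, and paths
have length at most `2 log₂ log₂ n + 4 < 3 ln ln n`.
-/

namespace SimpleGraph.Walk

variable {V : Type*} {G : SimpleGraph V} {parent : V → Option V} {height : V → ℕ}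

theorem IsPath.length_le_of_parent_notMem_support
    (hadj : ∀ a b, G.Adj a b → parent a = some b ∨ parent b = some a)
    (hlt : ∀ v w, parent v = some w → height v < height w) {x v : V} (p : G.Walk x v)
    (hp : p.IsPath) (hx : ∀ y, parent x = some y → y ∉ p.support) : p.length ≤ height x := by
  induction p with
  | nil => exact Nat.zero_le _
  | @cons x w v hxw p ih =>
    rw [cons_isPath_iff] at hp
    have hwx : parent w = some x := by
      refine (hadj x w hxw).resolve_left fun hpar => hx w hpar ?_
      simp
    have := ih hp.1 fun y hy => by
      obtain rfl := Option.some.inj (hwx.symm.trans hy)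
      exact hp.2
    have := hlt w x hwx
    rw [length_cons]
    omega

/-- A path climbs along `parent` and, after its first step down, can only keep descending. -/
theorem IsPath.length_add_le_two_mul
    (hadj : ∀ a b, G.Adj a b → parent a = some b ∨ parent b = some a)
    (hlt : ∀ v w, parent v = some w → height v < height w) {H : ℕ} (hle : ∀ v, height v ≤ H)
    {u v : V} (p : G.Walk u v) (hp : p.IsPath) : p.length + height u ≤ 2 * H := by
  induction p with
  | @nil u => have := hle u; simp only [length_nil]; omega
  | @cons u w v huw p ih =>
    rw [cons_isPath_iff] at hp
    rw [length_cons]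
    rcases hadj u w huw with hup | hdown
    · have := ih hp.1
      have := hlt u w hup
      omega
    · have := hp.1.length_le_of_parent_notMem_support hadj hlt p fun y hy => by
        obtain rfl := Option.some.inj (hdown.symm.trans hy)
        exact hp.2
      have := hlt w u hdown
      have := hle u
      omega

end SimpleGraph.Walk

section WaiterGame

variable [DecidableEq α] {q : ℕ} {P Q : Finset α → Prop}

theorem WaiterCanAux.mono (hPQ : ∀ C, P C → Q C) :
    ∀ {fuel C F}, WaiterCanAux q P fuel C F → WaiterCanAux q Q fuel C F
  | 0, _, _, ⟨hF, hP⟩ => ⟨hF, hPQ _ hP⟩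
  | fuel + 1, C, F, hW => by
    unfold WaiterCanAux at hW ⊢
    split_ifs at hW ⊢
    · exact hPQ C hW
    · obtain ⟨O, hOF, hO, hOq, hnext⟩ := hW
      exact ⟨O, hOF, hO, hOq, fun x hx => (hnext x hx).mono hPQ⟩

theorem WaiterCanForce.mono {X : Finset α} (hW : WaiterCanForce X q P)
    (hPQ : ∀ C, P C → Q C) : WaiterCanForce X q Q :=
  WaiterCanAux.mono hPQ hW

theorem waiterCanAux_of_invariant (I : Finset α → Finset α → Prop)
    (hfinal : ∀ C, I C ∅ → P C)
    (hstep : ∀ C F, I C F → F.Nonempty →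
      ∃ O ⊆ F, O.Nonempty ∧ O.card ≤ q + 1 ∧ ∀ x ∈ O, I (insert x C) (F \ O)) :
    ∀ fuel C F, F.card ≤ fuel → I C F → WaiterCanAux q P fuel C F
  | 0, C, F, hcard, hI => by
    obtain rfl := card_eq_zero.mp (Nat.le_zero.mp hcard)
    exact ⟨rfl, hfinal C hI⟩
  | fuel + 1, C, F, hcard, hI => by
    unfold WaiterCanAux
    split_ifs with hF
    · exact hfinal C (hF ▸ hI)
    · obtain ⟨O, hOF, hO, hOq, hnext⟩ := hstep C F hI (nonempty_iff_ne_empty.mpr hF)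
      refine ⟨O, hOF, hO, hOq, fun x hx => waiterCanAux_of_invariant I hfinal hstep fuel _ _ ?_
        (hnext x hx)⟩
      rw [card_sdiff_of_subset hOF]
      have := hO.card_pos
      omega

theorem waiterCanForce_of_invariant (I : Finset α → Finset α → Prop) {X : Finset α}
    (hinit : I ∅ X) (hfinal : ∀ C, I C ∅ → P C)
    (hstep : ∀ C F, I C F → F.Nonempty →
      ∃ O ⊆ F, O.Nonempty ∧ O.card ≤ q + 1 ∧ ∀ x ∈ O, I (insert x C) (F \ O)) :
    WaiterCanForce X q P :=
  waiterCanAux_of_invariant I hfinal hstep _ _ _ le_rfl hinit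

end WaiterGame

/-- Waiter's batch size in phase `i`. -/
def phaseSize : ℕ → ℕ
  | 0 => 1
  | i + 1 => phaseSize i * (phaseSize i + 1)

theorem phaseSize_pos (i : ℕ) : 0 < phaseSize i := by
  induction i with
  | zero => exact Nat.one_pos
  | succ i ih => exact Nat.mul_pos ih (Nat.succ_pos _)

theorem two_pow_two_pow_le_phaseSize_succ (i : ℕ) : 2 ^ 2 ^ i ≤ phaseSize (i + 1) := by
  induction i with
  | zero => decide
  | succ i ih =>
    calc 2 ^ 2 ^ (i + 1) = 2 ^ 2 ^ i * 2 ^ 2 ^ i := by rw [pow_succ, pow_mul, sq]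
      _ ≤ phaseSize (i + 1) * (phaseSize (i + 1) + 1) :=
        Nat.mul_le_mul ih (ih.trans (Nat.le_succ _))

def phaseBound (N : ℕ) : ℕ := Nat.log 2 (Nat.log 2 N) + 1

theorem le_phaseBound {N i : ℕ} (h : phaseSize i * 2 ≤ N) : i ≤ phaseBound N := by
  rcases i with _ | j
  · exact Nat.zero_le _
  have hpow : 2 ^ (2 ^ j + 1) ≤ N :=
    (Nat.mul_le_mul_right 2 (two_pow_two_pow_le_phaseSize_succ j)).trans h
  have hlog : 2 ^ j < Nat.log 2 N :=
    Nat.lt_of_succ_le ((Nat.le_log_iff_pow_le one_lt_two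
      (Nat.one_le_iff_ne_zero.mp (Nat.one_le_two_pow.trans hpow))).mpr hpow)
  exact Nat.succ_le_succ <|
    (Nat.le_log_iff_pow_le one_lt_two (Nat.ne_zero_of_lt hlog)).mpr hlog.le

theorem phaseBound_le_logb (N : ℕ) :
    (phaseBound N : ℝ) ≤ Real.logb 2 (Real.logb 2 N) + 1 := by
  rcases Nat.lt_or_ge N 2 with hN | hN
  · interval_cases N <;> simp [phaseBound]
  have hlog : (Nat.log 2 N : ℝ) ≤ Real.logb 2 N := by exact_mod_cast Real.natLog_le_logb N 2
  have hpos : (0 : ℝ) < Nat.log 2 N := by exact_mod_cast Nat.log_pos one_lt_two hN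
  have : (Nat.log 2 (Nat.log 2 N) : ℝ) ≤ Real.logb 2 (Real.logb 2 N) :=
    calc (Nat.log 2 (Nat.log 2 N) : ℝ) ≤ Real.logb 2 (Nat.log 2 N) := by
          exact_mod_cast Real.natLog_le_logb (Nat.log 2 N) 2
      _ ≤ Real.logb 2 (Real.logb 2 N) := Real.logb_le_logb_of_le one_lt_two hpos hlog
  simpa [phaseBound] using this

/-- The constant `3` works because `2 / log 2 < 3`. -/
theorem eventually_two_mul_phaseBound_lt :
    ∀ᶠ n : ℕ in Filter.atTop, (2 * (phaseBound n + 1) : ℝ) < 3 * Real.log (Real.log n) := by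
  have hloglog : Filter.Tendsto (fun n : ℕ => Real.log (Real.log n)) Filter.atTop Filter.atTop :=
    (Real.tendsto_log_atTop.comp Real.tendsto_log_atTop).comp tendsto_natCast_atTop_atTop
  filter_upwards [hloglog.eventually_ge_atTop 100] with n ht
  set t := Real.log (Real.log n)
  set L := Real.log 2
  have hL : 0.6931 < L := lt_trans (by norm_num) Real.log_two_gt_d9
  have hlogn : Real.log n ≠ 0 := fun h => by simp [t, h] at ht; norm_num at ht
  have hc : -(1 / 2) ≤ Real.log L := by
    have := Real.one_sub_inv_le_log_of_pos (show 0 < L by positivity)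
    have : L⁻¹ ≤ 3 / 2 := by rw [inv_le_comm₀ (by positivity) (by norm_num)]; linarith
    linarith
  set y := Real.logb 2 (Real.logb 2 n)
  have hy : y * L = t - Real.log L := by
    simp only [y, Real.logb, L, t]
    rw [div_mul_cancel₀ _ (Real.log_pos one_lt_two).ne', Real.log_div hlogn (by positivity)]
  have hbound := phaseBound_le_logb n
  have key : L * (2 * (y + 2)) < L * (3 * t) := by nlinarith
  have := lt_of_mul_lt_mul_left key (by positivity)
  linarith

/-- The potential `#(X \ Y) + (k + 1) * #Y` of Waiter's strategy does not increase in a round: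
a vertex `b` can newly join `Y` only when `S` is a full batch of `k` vertices. -/
theorem card_sdiff_add_mul_card_le [DecidableEq α] {X Y S : Finset α} {b : α} {k : ℕ}
    (hS : S ⊆ X \ Y) (hb : b ∈ X) (hSk : S.card = min k (X \ Y).card) :
    ((X \ S) \ (insert b Y \ S)).card + (k + 1) * (insert b Y \ S).card ≤
      (X \ Y).card + (k + 1) * Y.card := by
  have hX : (X \ S) \ (insert b Y \ S) = ((X \ Y) \ S).erase b := by
    ext v
    simp only [mem_sdiff, mem_insert, mem_erase]
    tauto
  have hcard : ((X \ Y) \ S).card = (X \ Y).card - S.card := card_sdiff_of_subset hS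
  rw [hX]
  by_cases hbE : b ∈ (X \ Y) \ S
  · have hbS : b ∉ S := (mem_sdiff.mp hbE).2
    have hbY : b ∉ Y := (mem_sdiff.mp (mem_sdiff.mp hbE).1).2
    have hSfull : S.card = k := by
      by_contra hne
      have : S = X \ Y := eq_of_subset_of_card_le hS (by omega)
      exact hbS (this ▸ (mem_sdiff.mp hbE).1)
    have hY : insert b Y \ S = insert b Y := sdiff_eq_self_of_disjoint <|
      disjoint_insert_left.mpr ⟨hbS, disjoint_left.mpr fun v hv hvS => (mem_sdiff.mp (hS hvS)).2 hv⟩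
    have hpos : 0 < ((X \ Y) \ S).card := card_pos.mpr ⟨b, hbE⟩
    rw [hY, card_erase_of_mem hbE, card_insert_of_notMem hbY, mul_add, mul_one]
    omega
  · have hY : insert b Y \ S ⊆ Y := fun v hv => by
      simp only [mem_sdiff, mem_insert] at hv hbE
      rcases hv with ⟨rfl | hvY, hvS⟩
      · tauto
      · exact hvY
    rw [erase_eq_of_notMem hbE]
    exact Nat.add_le_add (card_le_card sdiff_subset) (Nat.mul_le_mul_left _ (card_le_card hY))

section CompleteGraph

variable {V : Type*} [Fintype V] [DecidableEq V]

theorem mem_edgeFinset_inter_sym2_sdiff_sym2 {X S : Finset V} (hS : S ⊆ X) {e : Sym2 V} :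
    e ∈ ((⊤ : SimpleGraph V).edgeFinset ∩ X.sym2) \ (X \ S).sym2 ↔
      ∃ a ∈ S, ∃ b ∈ X, a ≠ b ∧ e = s(a, b) := by
  induction e using Sym2.ind with
  | h x y =>
    simp only [mem_sdiff, mem_inter, SimpleGraph.mem_edgeFinset, SimpleGraph.top_adj,
      SimpleGraph.mem_edgeSet, mk_mem_sym2_iff, Sym2.eq_iff]
    constructor
    · rintro ⟨⟨hxy, hx, hy⟩, hout⟩
      by_cases hxS : x ∈ S
      · exact ⟨x, hxS, y, hy, hxy, Or.inl ⟨rfl, rfl⟩⟩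
      · exact ⟨y, by tauto, x, hx, Ne.symm hxy, Or.inr ⟨rfl, rfl⟩⟩
    · rintro ⟨a, ha, b, hb, hab, ⟨rfl, rfl⟩ | ⟨rfl, rfl⟩⟩
      · exact ⟨⟨hab, hS ha, hb⟩, fun h => h.1.2 ha⟩
      · exact ⟨⟨Ne.symm hab, hb, hS ha⟩, fun h => h.2.2 ha⟩

theorem card_edgeFinset_inter_sym2_sdiff_sym2_le {X S : Finset V} (hS : S ⊆ X) :
    (((⊤ : SimpleGraph V).edgeFinset ∩ X.sym2) \ (X \ S).sym2).card ≤ S.card * X.card :=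
  calc (((⊤ : SimpleGraph V).edgeFinset ∩ X.sym2) \ (X \ S).sym2).card
      ≤ ((S ×ˢ X).image fun p => s(p.1, p.2)).card := card_le_card fun e he => by
        obtain ⟨a, ha, b, hb, -, rfl⟩ := (mem_edgeFinset_inter_sym2_sdiff_sym2 hS).mp he
        exact mem_image.mpr ⟨(a, b), mem_product.mpr ⟨ha, hb⟩, rfl⟩
    _ ≤ (S ×ˢ X).card := card_image_le
    _ = S.card * X.card := card_product S X

theorem one_lt_card_of_nonempty_edgeFinset_inter_sym2 {X : Finset V}
    (h : ((⊤ : SimpleGraph V).edgeFinset ∩ X.sym2).Nonempty) : 1 < X.card := by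
  obtain ⟨e, he⟩ := h
  induction e using Sym2.ind with
  | h x y =>
    simp only [mem_inter, SimpleGraph.mem_edgeFinset, SimpleGraph.top_adj,
      SimpleGraph.mem_edgeSet, mk_mem_sym2_iff] at he
    exact one_lt_card.mpr ⟨x, he.2.1, y, he.2.2, he.1⟩

end CompleteGraph

/-- A position of Waiter's strategy with budget `N` per offer, in which Client has claimed `C`
and `F` is still free. A live vertex is `busy` once it has received a child during the current
phase; the other live vertices are eligible for the next batch. -/
structure WaiterState {V : Type*} [Fintype V] [DecidableEq V] (N : ℕ) (C F : Finset (Sym2 V)) where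
  live : Finset V
  busy : Finset V
  phase : ℕ
  bound : ℕ
  parent : V → Option V
  height : V → ℕ
  free_eq : F = (⊤ : SimpleGraph V).edgeFinset ∩ live.sym2
  busy_subset : busy ⊆ live
  mem_client : ∀ e, e ∈ C ↔ ∃ v w, parent v = some w ∧ e = s(v, w)
  parent_live : ∀ v ∈ live, parent v = none
  height_live : ∀ v ∈ live, height v = phase + 1
  height_lt : ∀ v w, parent v = some w → height v < height w
  height_le : ∀ v, height v ≤ phase + 1
  height_lt_phase : ∀ v w, parent v = some w → w ∈ live \ busy → height v < phase
  phase_le : phase ≤ phaseBound N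
  potential_le : (live \ busy).card + (phaseSize phase + 1) * busy.card ≤ bound
  budget : phaseSize phase * bound ≤ N

namespace WaiterState

variable {V : Type*} [Fintype V] [DecidableEq V] {N : ℕ} {C F : Finset (Sym2 V)}

def init (hN : Fintype.card V ≤ N) : WaiterState N ∅ (⊤ : SimpleGraph V).edgeFinset where
  live := univ
  busy := ∅
  phase := 0
  bound := N
  parent _ := none
  height _ := 1
  free_eq := by rw [sym2_univ, inter_univ]
  busy_subset := empty_subset _
  mem_client := by simp
  parent_live _ _ := rfl
  height_live _ _ := rfl
  height_lt := by simp
  height_le _ := le_rfl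
  height_lt_phase := by simp
  phase_le := Nat.zero_le _
  potential_le := by simpa using hN
  budget := by simp [phaseSize]

theorem card_live_le (D : WaiterState N C F) : D.live.card ≤ D.bound := calc
  D.live.card = (D.live \ D.busy).card + D.busy.card :=
    (card_sdiff_add_card_eq_card D.busy_subset).symm
  _ ≤ (D.live \ D.busy).card + (phaseSize D.phase + 1) * D.busy.card :=
    Nat.add_le_add_left (Nat.le_mul_of_pos_left _ (Nat.succ_pos _)) _
  _ ≤ D.bound := D.potential_le

theorem one_lt_card_live (D : WaiterState N C F) (hF : F.Nonempty) : 1 < D.live.card :=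
  one_lt_card_of_nonempty_edgeFinset_inter_sym2 (D.free_eq ▸ hF)

/-- Once every live vertex is busy, the potential bound reads
`(phaseSize phase + 1) * #live ≤ bound`, which pays for the larger batches of the next phase. -/
theorem phaseSize_succ_mul_card_live_le (D : WaiterState N C F) (hE : D.live \ D.busy = ∅) :
    phaseSize (D.phase + 1) * D.live.card ≤ N := calc
  phaseSize (D.phase + 1) * D.live.card =
      phaseSize D.phase * ((phaseSize D.phase + 1) * D.busy.card) := by
    rw [sdiff_eq_empty_iff_subset.mp hE |>.antisymm D.busy_subset, phaseSize, mul_assoc]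
  _ ≤ phaseSize D.phase * D.bound := Nat.mul_le_mul_left _ <| by simpa [hE] using D.potential_le
  _ ≤ N := D.budget

def nextPhase (D : WaiterState N C F) (hE : D.live \ D.busy = ∅) (hlive : 1 < D.live.card) :
    WaiterState N C F where
  live := D.live
  busy := ∅
  phase := D.phase + 1
  bound := D.live.card
  parent := D.parent
  height v := if v ∈ D.live then D.phase + 2 else D.height v
  free_eq := D.free_eq
  busy_subset := empty_subset _
  mem_client := D.mem_client
  parent_live := D.parent_live
  height_live _ hv := if_pos hv
  height_lt v w hvw := by
    have hv : v ∉ D.live := fun hv => by simp [D.parent_live v hv] at hvw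
    have := D.height_lt v w hvw
    have := D.height_le v
    simp only [if_neg hv]
    split_ifs <;> omega
  height_le v := by
    have := D.height_le v
    split_ifs <;> omega
  height_lt_phase v w hvw hw := by
    have hv : v ∉ D.live := fun hv => by simp [D.parent_live v hv] at hvw
    have := D.height_lt v w hvw
    have := D.height_live w (sdiff_subset hw)
    simp only [if_neg hv]
    omega
  phase_le := le_phaseBound <|
    (Nat.mul_le_mul_left _ hlive).trans (D.phaseSize_succ_mul_card_live_le hE)
  potential_le := by simp
  budget := D.phaseSize_succ_mul_card_live_le hE

theorem exists_eligible (D : WaiterState N C F) (hF : F.Nonempty) :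
    ∃ D' : WaiterState N C F, (D'.live \ D'.busy).Nonempty := by
  rcases (D.live \ D.busy).eq_empty_or_nonempty with hE | hE
  · refine ⟨D.nextPhase hE (D.one_lt_card_live hF), ?_⟩
    simpa [nextPhase] using card_pos.mp (D.one_lt_card_live hF).le
  · exact ⟨D, hE⟩

/-- The position after Waiter offers every free edge meeting the batch `S` of eligible vertices
and Client picks `s(a, b)` with `a ∈ S`: the whole batch dies and `a` becomes a child of `b`. -/
def claim (D : WaiterState N C F) {S : Finset V} (hS : S ⊆ D.live \ D.busy)
    (hSk : S.card = min (phaseSize D.phase) (D.live \ D.busy).card) {a b : V} (ha : a ∈ S)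
    (hb : b ∈ D.live) (hab : a ≠ b) :
    WaiterState N (insert s(a, b) C) (F \ (F \ (D.live \ S).sym2)) where
  live := D.live \ S
  busy := insert b D.busy \ S
  phase := D.phase
  bound := D.bound
  parent := Function.update D.parent a (some b)
  height := Function.update D.height a D.phase
  free_eq := by
    rw [sdiff_sdiff_self_left]
    refine (congrArg (· ∩ (D.live \ S).sym2) D.free_eq).trans ?_
    rw [inter_assoc, inter_eq_right.mpr (sym2_mono sdiff_subset)]
  busy_subset := sdiff_subset_sdiff (insert_subset hb D.busy_subset) le_rfl
  mem_client e := by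
    have ha_live : a ∈ D.live := (mem_sdiff.mp (hS ha)).1
    simp only [mem_insert, D.mem_client, Function.update_apply]
    constructor
    · rintro (rfl | ⟨v, w, hvw, rfl⟩)
      · exact ⟨a, b, if_pos rfl, rfl⟩
      · refine ⟨v, w, ?_, rfl⟩
        rwa [if_neg]
        rintro rfl
        simp [D.parent_live v ha_live] at hvw
    · rintro ⟨v, w, hvw, rfl⟩
      split_ifs at hvw with hva
      · cases hva; cases hvw; exact Or.inl rfl
      · exact Or.inr ⟨v, w, hvw, rfl⟩
  parent_live v hv := by
    rw [Function.update_of_ne (by rintro rfl; exact (mem_sdiff.mp hv).2 ha)]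
    exact D.parent_live v (mem_sdiff.mp hv).1
  height_live v hv := by
    rw [Function.update_of_ne (by rintro rfl; exact (mem_sdiff.mp hv).2 ha)]
    exact D.height_live v (mem_sdiff.mp hv).1
  height_lt v w hvw := by
    by_cases hva : v = a
    · rw [hva, Function.update_self, Option.some_inj] at hvw
      rw [hva, ← hvw, Function.update_self, Function.update_of_ne hab.symm, D.height_live b hb]
      exact Nat.lt_succ_self _
    rw [Function.update_of_ne hva] at hvw ⊢
    by_cases hwa : w = a
    · rw [hwa] at hvw ⊢
      rw [Function.update_self]
      exact D.height_lt_phase v a hvw (hS ha)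
    · rw [Function.update_of_ne hwa]
      exact D.height_lt v w hvw
  height_le v := by
    rw [Function.update_apply]
    split_ifs
    · exact Nat.le_succ _
    · exact D.height_le v
  height_lt_phase v w hvw hw := by
    simp only [mem_sdiff, mem_insert, not_and, not_not] at hw
    have hva : v ≠ a := by
      rintro rfl
      rw [Function.update_self, Option.some_inj] at hvw
      exact hw.1.2 (hw.2 (Or.inl hvw.symm))
    rw [Function.update_of_ne hva] at hvw ⊢
    exact D.height_lt_phase v w hvw (mem_sdiff.mpr ⟨hw.1.1, fun hwY => hw.1.2 (hw.2 (Or.inr hwY))⟩)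
  phase_le := D.phase_le
  potential_le := (card_sdiff_add_mul_card_le hS hb hSk).trans D.potential_le
  budget := D.budget

theorem exists_offer {q : ℕ} (hq : N ≤ q + 1) (D : WaiterState N C F)
    (hE : (D.live \ D.busy).Nonempty) (hF : F.Nonempty) :
    ∃ O ⊆ F, O.Nonempty ∧ O.card ≤ q + 1 ∧
      ∀ e ∈ O, Nonempty (WaiterState N (insert e C) (F \ O)) := by
  obtain ⟨S, hS, hSk⟩ :=
    exists_subset_card_eq (min_le_right (phaseSize D.phase) (D.live \ D.busy).card)
  have hSX : S ⊆ D.live := hS.trans sdiff_subset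
  have hO : ∀ e, e ∈ F \ (D.live \ S).sym2 ↔ ∃ a ∈ S, ∃ b ∈ D.live, a ≠ b ∧ e = s(a, b) := by
    intro e
    have := mem_edgeFinset_inter_sym2_sdiff_sym2 (e := e) hSX
    rwa [← D.free_eq] at this
  have hOcard := card_edgeFinset_inter_sym2_sdiff_sym2_le hSX
  rw [← D.free_eq] at hOcard
  obtain ⟨a, ha⟩ : S.Nonempty := card_pos.mp <| by
    rw [hSk]
    exact lt_min (phaseSize_pos _) (card_pos.mpr hE)
  obtain ⟨b, hb, hba⟩ := exists_mem_ne (D.one_lt_card_live hF) a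
  refine ⟨F \ (D.live \ S).sym2, sdiff_subset,
    ⟨s(a, b), (hO _).mpr ⟨a, ha, b, hb, hba.symm, rfl⟩⟩, ?_, fun e he => ?_⟩
  · calc (F \ (D.live \ S).sym2).card ≤ S.card * D.live.card := hOcard
      _ ≤ phaseSize D.phase * D.bound := Nat.mul_le_mul (hSk ▸ min_le_left _ _) D.card_live_le
      _ ≤ N := D.budget
      _ ≤ q + 1 := hq
  · obtain ⟨a, ha, b, hb, hab, rfl⟩ := (hO e).mp he
    exact ⟨D.claim hS hSk ha hb hab⟩

theorem isPath_length_le (D : WaiterState N C F) {u v : V} (p : (clientGraph C).Walk u v)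
    (hp : p.IsPath) : p.length ≤ 2 * (phaseBound N + 1) := by
  have hadj : ∀ x y, (clientGraph C).Adj x y → D.parent x = some y ∨ D.parent y = some x := by
    intro x y hxy
    rw [clientGraph, SimpleGraph.fromEdgeSet_adj, mem_coe, D.mem_client] at hxy
    obtain ⟨⟨v, w, hvw, heq⟩, -⟩ := hxy
    rcases Sym2.eq_iff.mp heq with ⟨rfl, rfl⟩ | ⟨rfl, rfl⟩
    · exact Or.inl hvw
    · exact Or.inr hvw
  have := hp.length_add_le_two_mul hadj D.height_lt fun v =>
    (D.height_le v).trans (Nat.succ_le_succ D.phase_le)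
  omega

end WaiterState

theorem waiterCanForce_isPath_length_le {V : Type*} [Fintype V] [DecidableEq V] {q : ℕ}
    (hq : Fintype.card V ≤ q + 1) :
    WaiterCanForce (⊤ : SimpleGraph V).edgeFinset q fun C =>
      ∀ (u v : V) (p : (clientGraph C).Walk u v), p.IsPath →
        p.length ≤ 2 * (phaseBound (Fintype.card V) + 1) :=
  waiterCanForce_of_invariant (fun C F => Nonempty (WaiterState (Fintype.card V) C F))
    ⟨WaiterState.init le_rfl⟩ (fun _ ⟨D⟩ _ _ p hp => D.isPath_length_le p hp)
    fun _ _ ⟨D⟩ hF => by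
      obtain ⟨D', hE⟩ := D.exists_eligible hF
      exact D'.exists_offer hq hE hF

/-- Theorem 3(ii): for `n` large enough, if `q ≥ n` then `P(n,q) < 3 ln ln n`: Waiter can
ensure that Client's final graph contains no path with at least `3 ln ln n` edges. -/
theorem stmt6 :
    ∃ n₀ : ℕ, ∀ n : ℕ, n₀ ≤ n → ∀ q : ℕ, 0 < q → n ≤ q →
      WaiterCanForce (Kboard n) q
        (fun C => ∀ (u v : Fin n) (p : (clientGraph C).Walk u v), p.IsPath →
          (p.length : ℝ) < 3 * Real.log (Real.log n)) := by
  obtain ⟨n₀, hn₀⟩ := Filter.eventually_atTop.mp eventually_two_mul_phaseBound_lt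
  refine ⟨n₀, fun n hn q _ hq => ?_⟩
  have hcard : Fintype.card (Fin n) ≤ q + 1 := by rw [Fintype.card_fin]; omega
  refine (waiterCanForce_isPath_length_le hcard).mono fun C hC u v p hp => ?_
  have hlen : p.length ≤ 2 * (phaseBound n + 1) := by simpa using hC u v p hp
  calc (p.length : ℝ) ≤ (2 * (phaseBound n + 1) : ℕ) := by exact_mod_cast hlen
    _ < 3 * Real.log (Real.log n) := by exact_mod_cast hn₀ n hn
end

section
/- There exists ε₀ > 0 such that for every 0 < ε < ε₀ there exists n₀ such that for every integer n > n₀ and every positive integer q with q ≤ ε·n, Client has a strategy in the Client-Waiter game with bias q played on the board E(K_n) guaranteeing that at the end of the game his graph contains a path with at least (1 − 4ε·ln(1/ε))·n edges; in other words, P(n,q) ≥ (1 − 4ε·ln(1/ε))·n. -/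
open Finset

variable {α : Type*}

/-!
Client plays a potential strategy of Erdős–Selfridge type against the family of edge sets
between two disjoint `k`-sets of vertices. A member `B` not yet met by Client carries weight
`(q/(q+1))^{|B ∩ F|}`, `F` being the free elements; whatever at most `q + 1` elements Waiter
offers, some choice of Client does not increase the total weight (by Bernoulli's inequality),
so if it starts below `1`, Client meets every member, and his graph joins every two disjoint
`k`-sets by an edge. In depth-first search no finished vertex has an unvisited neighbour, so
once finished and unvisited vertices are equally many, there are fewer than `k` of each and
the stack is a path on more than `n - 2k` vertices. For `q ≤ εn` the initial weight
`binom(n,k)² (q/(q+1))^{k²} ≤ ((en/k)² e^{-k/(q+1)})^k` is below `1` for `k = ⌊2εn ln(1/ε)⌋`.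
-/

namespace ClientCanAux

variable [DecidableEq α] {q : ℕ} {P P' : Finset α → Prop}

theorem mono (h : ∀ C, P C → P' C) :
    ∀ {fuel : ℕ} {C F : Finset α}, ClientCanAux q P fuel C F → ClientCanAux q P' fuel C F
  | 0, C, _, hc => ⟨hc.1, h C hc.2⟩
  | fuel + 1, C, F, hc => by
    rw [ClientCanAux] at hc ⊢
    split_ifs at hc ⊢ with hF
    · exact h C hc
    · intro O hOF hO hOq
      obtain ⟨x, hx, hrec⟩ := hc O hOF hO hOq
      exact ⟨x, hx, mono h hrec⟩

end ClientCanAux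

theorem ClientCanForce.mono [DecidableEq α] {X : Finset α} {q : ℕ} {P P' : Finset α → Prop}
    (hP : ClientCanForce X q P) (h : ∀ C, P C → P' C) : ClientCanForce X q P' :=
  ClientCanAux.mono h hP

theorem sub_le_mul_div_add_one_pow {o q : ℕ} (hoq : o ≤ q + 1) (j : ℕ) :
    (o : ℝ) - j ≤ o * ((q : ℝ) / (q + 1)) ^ j := by
  have hq : (0 : ℝ) < q + 1 := by positivity
  have hbernoulli : 1 - j / ((q : ℝ) + 1) ≤ ((q : ℝ) / (q + 1)) ^ j := by
    have h := one_add_mul_le_pow (a := -(1 / ((q : ℝ) + 1)))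
      (by rw [neg_le_neg_iff, div_le_iff₀ hq]; linarith) j
    have hμ : (q : ℝ) / (q + 1) = 1 + -(1 / ((q : ℝ) + 1)) := by field_simp; ring
    rw [hμ]
    exact le_of_eq_of_le (by ring) h
  have hoj : (o : ℝ) * j / (q + 1) ≤ j := by
    rw [div_le_iff₀ hq, mul_comm (j : ℝ)]
    gcongr
    exact_mod_cast hoq
  calc (o : ℝ) - j ≤ o * (1 - j / ((q : ℝ) + 1)) := by
        rw [mul_one_sub, mul_div_assoc']; linarith
    _ ≤ _ := mul_le_mul_of_nonneg_left hbernoulli o.cast_nonneg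

section Potential

variable {ι : Type*} [DecidableEq α] (q : ℕ)

/-- `C` is the set claimed by Client and `F` the set of free elements. -/
noncomputable def unhitWeight (B C F : Finset α) : ℝ :=
  if Disjoint B C then ((q : ℝ) / (q + 1)) ^ #(B ∩ F) else 0

noncomputable def unhitPotential (s : Finset ι) (B : ι → Finset α) (C F : Finset α) : ℝ :=
  ∑ i ∈ s, unhitWeight q (B i) C F

variable {q}

theorem unhitWeight_nonneg (B C F : Finset α) : 0 ≤ unhitWeight q B C F := by
  unfold unhitWeight; split_ifs <;> positivity

theorem sum_unhitWeight_insert_le {B C F O : Finset α} (hOF : O ⊆ F) (hOq : #O ≤ q + 1) :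
    ∑ x ∈ O, unhitWeight q B (insert x C) (F \ O) ≤ #O * unhitWeight q B C F := by
  unfold unhitWeight
  by_cases hBC : Disjoint B C
  · have hcard : #(B ∩ F) = #(B ∩ (F \ O)) + #(O ∩ B) := by
      have hsplit : B ∩ F = B ∩ (F \ O) ∪ O ∩ B := by
        ext x; have := @hOF x; simp only [mem_inter, mem_union, mem_sdiff]; tauto
      rw [hsplit, card_union_of_disjoint <| disjoint_left.2 fun x hx hx' =>
        (mem_sdiff.1 (mem_inter.1 hx).2).2 (mem_inter.1 hx').1]
    have hfree : #(O \ B) = (#O : ℝ) - #(O ∩ B) := by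
      rw [← card_sdiff_add_card_inter O B]; push_cast; ring
    simp only [disjoint_insert_right, hBC, and_true, if_true]
    rw [sum_ite, sum_const_zero, add_zero, sum_const, nsmul_eq_mul, ← sdiff_eq_filter, hfree,
      hcard, pow_add, ← mul_assoc, mul_right_comm]
    exact mul_le_mul_of_nonneg_right (sub_le_mul_div_add_one_pow hOq _) (by positivity)
  · simp [disjoint_insert_right, hBC]

theorem exists_unhitPotential_insert_le {s : Finset ι} {B : ι → Finset α} {C F O : Finset α}
    (hOF : O ⊆ F) (hO : O.Nonempty) (hOq : #O ≤ q + 1) :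
    ∃ x ∈ O, unhitPotential q s B (insert x C) (F \ O) ≤ unhitPotential q s B C F := by
  refine exists_le_of_sum_le hO ?_
  calc ∑ x ∈ O, unhitPotential q s B (insert x C) (F \ O)
      = ∑ i ∈ s, ∑ x ∈ O, unhitWeight q (B i) (insert x C) (F \ O) := sum_comm
    _ ≤ ∑ i ∈ s, #O * unhitWeight q (B i) C F :=
      sum_le_sum fun i _ => sum_unhitWeight_insert_le hOF hOq
    _ = ∑ _x ∈ O, unhitPotential q s B C F := by rw [← mul_sum, sum_const, nsmul_eq_mul]; rfl

theorem not_disjoint_of_unhitPotential_empty_lt_one {s : Finset ι} {B : ι → Finset α}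
    {C : Finset α} (h : unhitPotential q s B C ∅ < 1) : ∀ i ∈ s, ¬Disjoint (B i) C := by
  intro i hi hBC
  have hterm : unhitWeight q (B i) C ∅ = 1 := by simp [unhitWeight, hBC]
  exact h.not_ge <| hterm ▸ single_le_sum (fun j _ => unhitWeight_nonneg _ _ _) hi

theorem clientCanAux_of_unhitPotential_lt_one {s : Finset ι} {B : ι → Finset α} :
    ∀ {fuel : ℕ} {C F : Finset α}, #F ≤ fuel → unhitPotential q s B C F < 1 →
      ClientCanAux q (fun C => ∀ i ∈ s, ¬Disjoint (B i) C) fuel C F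
  | 0, C, F, hF, h => by
    obtain rfl : F = ∅ := card_eq_zero.1 (Nat.le_zero.1 hF)
    exact ⟨rfl, not_disjoint_of_unhitPotential_empty_lt_one h⟩
  | fuel + 1, C, F, hF, h => by
    rw [ClientCanAux]
    split_ifs with hF0
    · subst hF0
      exact not_disjoint_of_unhitPotential_empty_lt_one h
    · intro O hOF hO hOq
      obtain ⟨x, hxO, hx⟩ :=
        exists_unhitPotential_insert_le (s := s) (B := B) (C := C) hOF hO hOq
      refine ⟨x, hxO, clientCanAux_of_unhitPotential_lt_one ?_ (hx.trans_lt h)⟩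
      have := card_lt_card (sdiff_ssubset hOF hO)
      omega

theorem clientCanForce_not_disjoint {X : Finset α} {s : Finset ι} {B : ι → Finset α}
    (hBX : ∀ i ∈ s, B i ⊆ X) (h : ∑ i ∈ s, ((q : ℝ) / (q + 1)) ^ #(B i) < 1) :
    ClientCanForce X q (fun C => ∀ i ∈ s, ¬Disjoint (B i) C) := by
  refine clientCanAux_of_unhitPotential_lt_one le_rfl <|
    lt_of_eq_of_lt (sum_congr rfl fun i hi => ?_) h
  simp [unhitWeight, inter_eq_left.2 (hBX i hi)]

end Potential

section CrossEdges

variable {V : Type*} [DecidableEq V]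

def crossEdges (A B : Finset V) : Finset (Sym2 V) := (A ×ˢ B).image fun ab => s(ab.1, ab.2)

theorem card_crossEdges {A B : Finset V} (h : Disjoint A B) : #(crossEdges A B) = #A * #B := by
  rw [crossEdges, card_image_of_injOn, card_product]
  rintro ⟨a, b⟩ hab ⟨c, d⟩ hcd heq
  simp only [coe_product, Set.mem_prod, mem_coe] at hab hcd
  rcases Sym2.eq_iff.1 heq with ⟨rfl, rfl⟩ | ⟨rfl, rfl⟩
  · rfl
  · exact (disjoint_left.1 h hcd.1 hab.2).elim

theorem exists_adj_of_not_disjoint_crossEdges {A B : Finset V} {C : Finset (Sym2 V)}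
    (hAB : Disjoint A B) (h : ¬Disjoint (crossEdges A B) C) :
    ∃ a ∈ A, ∃ b ∈ B, (clientGraph C).Adj a b := by
  obtain ⟨e, he, heC⟩ := not_disjoint_iff.1 h
  obtain ⟨⟨a, b⟩, hab, rfl⟩ := mem_image.1 (by simpa only [crossEdges] using he)
  obtain ⟨ha, hb⟩ := mem_product.1 hab
  exact ⟨a, ha, b, hb,
    (SimpleGraph.fromEdgeSet_adj _).2 ⟨heC, fun h => disjoint_left.1 hAB ha (h ▸ hb)⟩⟩

theorem crossEdges_subset_Kboard {n : ℕ} {A B : Finset (Fin n)} (h : Disjoint A B) :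
    crossEdges A B ⊆ Kboard n := by
  intro e he
  obtain ⟨⟨a, b⟩, hab, rfl⟩ := mem_image.1 (by simpa only [crossEdges] using he)
  obtain ⟨ha, hb⟩ := mem_product.1 hab
  simpa [Kboard] using fun h' : a = b => disjoint_left.1 h ha (h' ▸ hb)

end CrossEdges

def SimpleGraph.JoinsDisjointSets {V : Type*} (G : SimpleGraph V) (k : ℕ) : Prop :=
  ∀ A B : Finset V, #A = k → #B = k → Disjoint A B → ∃ a ∈ A, ∃ b ∈ B, G.Adj a b

theorem clientCanForce_joinsDisjointSets {n q k : ℕ}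
    (h : (n.choose k : ℝ) ^ 2 * ((q : ℝ) / (q + 1)) ^ (k * k) < 1) :
    ClientCanForce (Kboard n) q (fun C => (clientGraph C).JoinsDisjointSets k) := by
  classical
  let pairs := (univ.powersetCard k ×ˢ univ.powersetCard k).filter
    (fun AB : Finset (Fin n) × Finset (Fin n) => Disjoint AB.1 AB.2)
  have hpairs : ∀ AB ∈ pairs, #AB.1 = k ∧ #AB.2 = k ∧ Disjoint AB.1 AB.2 := by
    simp [pairs, and_assoc]
  have hcard : #pairs ≤ n.choose k ^ 2 :=
    calc #pairs ≤ #(univ.powersetCard k ×ˢ univ.powersetCard k) := card_filter_le _ _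
      _ = n.choose k ^ 2 := by simp [sq]
  have hsum : ∑ AB ∈ pairs, ((q : ℝ) / (q + 1)) ^ #(crossEdges AB.1 AB.2) < 1 := by
    refine lt_of_le_of_lt ?_ h
    rw [sum_congr rfl fun AB hAB => by
      rw [card_crossEdges (hpairs AB hAB).2.2, (hpairs AB hAB).1, (hpairs AB hAB).2.1],
      sum_const, nsmul_eq_mul]
    gcongr
    exact_mod_cast hcard
  refine (clientCanForce_not_disjoint (fun AB hAB => crossEdges_subset_Kboard (hpairs AB hAB).2.2)
    hsum).mono fun C hC A B hA hB hAB => exists_adj_of_not_disjoint_crossEdges hAB (hC (A, B) ?_)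
  simp [pairs, hA, hB, hAB]

namespace SimpleGraph

variable {V : Type*} [DecidableEq V] (G : SimpleGraph V)

/-- A state of depth-first search: `T` holds the finished vertices, the stack `S` (top first)
is a path of `G`, and `U` holds the unvisited vertices. -/
structure IsDfsState (T : Finset V) (S : List V) (U : Finset V) : Prop where
  mem_or_mem_or_mem : ∀ v, v ∈ T ∨ v ∈ S ∨ v ∈ U
  nodup : S.Nodup
  isChain : S.IsChain G.Adj
  notMem_of_mem_stack : ∀ v ∈ S, v ∉ T ∧ v ∉ U
  disjoint : Disjoint T U
  not_adj : ∀ t ∈ T, ∀ u ∈ U, ¬G.Adj t u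

variable {G} {T U : Finset V} {S : List V}

theorem IsDfsState.push (h : G.IsDfsState T S U) {u : V} (hu : u ∈ U)
    (hadj : ∀ v ∈ S.head?, G.Adj v u) : G.IsDfsState T (u :: S) (U.erase u) where
  mem_or_mem_or_mem w := by
    rcases h.mem_or_mem_or_mem w with hw | hw | hw
    · exact .inl hw
    · exact .inr (.inl (List.mem_cons_of_mem u hw))
    · by_cases hwu : w = u
      · exact .inr (.inl (hwu ▸ List.mem_cons_self))
      · exact .inr (.inr (mem_erase.2 ⟨hwu, hw⟩))
  nodup := List.nodup_cons.2 ⟨fun huS => (h.notMem_of_mem_stack u huS).2 hu, h.nodup⟩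
  isChain := List.isChain_cons.2 ⟨fun v hv => (hadj v hv).symm, h.isChain⟩
  notMem_of_mem_stack w hw := by
    rcases List.mem_cons.1 hw with rfl | hw
    · exact ⟨disjoint_right.1 h.disjoint hu, notMem_erase w U⟩
    · have hwS := h.notMem_of_mem_stack w hw
      exact ⟨hwS.1, fun h' => hwS.2 (mem_of_mem_erase h')⟩
  disjoint := h.disjoint.mono_right (erase_subset u U)
  not_adj t ht w hw := h.not_adj t ht w (mem_of_mem_erase hw)

theorem IsDfsState.pop {v : V} (h : G.IsDfsState T (v :: S) U) (hv : ∀ u ∈ U, ¬G.Adj v u) :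
    G.IsDfsState (insert v T) S U where
  mem_or_mem_or_mem w := by
    rcases h.mem_or_mem_or_mem w with hw | hw | hw
    · exact .inl (mem_insert_of_mem hw)
    · rcases List.mem_cons.1 hw with rfl | hw
      · exact .inl (mem_insert_self w T)
      · exact .inr (.inl hw)
    · exact .inr (.inr hw)
  nodup := (List.nodup_cons.1 h.nodup).2
  isChain := h.isChain.tail
  notMem_of_mem_stack w hw := by
    have hwS := h.notMem_of_mem_stack w (List.mem_cons_of_mem v hw)
    refine ⟨fun hwT => ?_, hwS.2⟩
    rcases mem_insert.1 hwT with rfl | hwT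
    · exact (List.nodup_cons.1 h.nodup).1 hw
    · exact hwS.1 hwT
  disjoint := disjoint_insert_left.2 ⟨(h.notMem_of_mem_stack v List.mem_cons_self).2, h.disjoint⟩
  not_adj t ht u hu := by
    rcases mem_insert.1 ht with rfl | ht
    · exact hv u hu
    · exact h.not_adj t ht u hu

/-- Each step of depth-first search decreases `2 #U + |S|`, which is at most `m`. -/
theorem exists_isDfsState_card_eq :
    ∀ (m : ℕ) (T : Finset V) (S : List V) (U : Finset V), G.IsDfsState T S U →
      2 * #U + S.length ≤ m → #T ≤ #U → ∃ T S U, G.IsDfsState T S U ∧ #T = #U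
  | 0, T, S, U, h, hm, hTU => ⟨T, S, U, h, by omega⟩
  | m + 1, T, S, U, h, hm, hTU => by
    rcases hTU.eq_or_lt with heq | hlt
    · exact ⟨T, S, U, h, heq⟩
    by_cases hext : ∃ u ∈ U, ∀ v ∈ S.head?, G.Adj v u
    · obtain ⟨u, hu, hadj⟩ := hext
      have := card_erase_of_mem hu
      exact exists_isDfsState_card_eq m _ _ _ (h.push hu hadj)
        (by rw [List.length_cons]; omega) (by omega)
    push Not at hext
    match S, h, hm with
    | [], _, _ =>
      obtain ⟨u, hu⟩ := card_pos.1 (by omega : 0 < #U)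
      obtain ⟨v, hv, _⟩ := hext u hu
      simp at hv
    | v :: S, h, hm =>
      have hv : ∀ u ∈ U, ¬G.Adj v u := fun u hu => by simpa using hext u hu
      have := card_insert_le v T
      exact exists_isDfsState_card_eq m _ _ _ (h.pop hv)
        (by rw [List.length_cons] at hm; omega) (by omega)

variable [Fintype V]

theorem JoinsDisjointSets.exists_isPath {k : ℕ} (hG : G.JoinsDisjointSets k)
    (hk : 2 * k ≤ Fintype.card V) :
    ∃ (u v : V) (p : G.Walk u v), p.IsPath ∧ Fintype.card V + 1 ≤ p.length + 2 * k := by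
  have hstart : G.IsDfsState ∅ [] univ :=
    ⟨fun v => .inr (.inr (mem_univ v)), List.nodup_nil, List.IsChain.nil, by simp,
      disjoint_empty_left _, by simp⟩
  obtain ⟨T, S, U, h, hTU⟩ := exists_isDfsState_card_eq _ _ _ _ hstart le_rfl (by simp)
  have hTk : #T < k := by
    by_contra! hkT
    obtain ⟨A, hAT, hA⟩ := exists_subset_card_eq hkT
    obtain ⟨B, hBU, hB⟩ := exists_subset_card_eq (hTU ▸ hkT)
    obtain ⟨a, ha, b, hb, hab⟩ := hG A B hA hB (h.disjoint.mono hAT hBU)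
    exact h.not_adj a (hAT ha) b (hBU hb) hab
  have hcover : Fintype.card V ≤ #T + S.length + #U := by
    calc Fintype.card V = #(T ∪ S.toFinset ∪ U) := by
          rw [← card_univ]; congr 1; ext v; simpa [or_assoc] using h.mem_or_mem_or_mem v
      _ ≤ #T + #S.toFinset + #U := (card_union_le _ _).trans (by gcongr; exact card_union_le _ _)
      _ ≤ #T + S.length + #U := by gcongr; exact S.toFinset_card_le
  have hS : S ≠ [] := by rintro rfl; rw [List.length_nil] at hcover; omega
  refine ⟨_, _, Walk.ofSupport S hS h.isChain, ?_, ?_⟩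
  · rw [Walk.isPath_def, Walk.support_ofSupport]
    exact h.nodup
  · rw [Walk.length_ofSupport]
    omega

end SimpleGraph

open Real

theorem Nat.choose_le_exp_one_mul_div_pow (n k : ℕ) :
    (n.choose k : ℝ) ≤ (exp 1 * n / k) ^ k := by
  rcases k.eq_zero_or_pos with rfl | hk
  · simp
  have hkk : (k : ℝ) ^ k ≤ exp k * k.factorial := by
    have := pow_div_factorial_le_exp (x := (k : ℝ)) k.cast_nonneg k
    rwa [div_le_iff₀ (by positivity)] at this
  calc (n.choose k : ℝ) ≤ n ^ k / k.factorial := Nat.choose_le_pow_div k n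
    _ ≤ (exp 1 * n / k) ^ k := by
      rw [div_pow, mul_pow, exp_one_pow, div_le_div_iff₀ (by positivity) (by positivity)]
      calc (n : ℝ) ^ k * k ^ k ≤ n ^ k * (exp k * k.factorial) := by gcongr
        _ = exp k * n ^ k * k.factorial := by ring

theorem div_add_one_pow_le_exp_neg (q k : ℕ) :
    ((q : ℝ) / (q + 1)) ^ k ≤ exp (-(k / (q + 1))) := by
  have hμ : (q : ℝ) / (q + 1) = -(1 / (q + 1)) + 1 := by field_simp; ring
  calc ((q : ℝ) / (q + 1)) ^ k ≤ exp (-(1 / (q + 1))) ^ k := by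
        gcongr
        rw [hμ]
        exact add_one_le_exp _
    _ = exp (-(k / (q + 1))) := by rw [← exp_nat_mul]; ring_nf

theorem choose_sq_mul_div_add_one_pow_lt_one {n q k : ℕ} (hk : 0 < k)
    (h : (exp 1 * n / k) ^ 2 < exp (k / (q + 1))) :
    (n.choose k : ℝ) ^ 2 * ((q : ℝ) / (q + 1)) ^ (k * k) < 1 := by
  have hround : (exp 1 * n / k) ^ 2 * ((q : ℝ) / (q + 1)) ^ k < 1 :=
    calc (exp 1 * n / k) ^ 2 * ((q : ℝ) / (q + 1)) ^ k
        ≤ (exp 1 * n / k) ^ 2 * exp (-(k / (q + 1))) := by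
          gcongr; exact div_add_one_pow_le_exp_neg q k
      _ < exp (k / (q + 1)) * exp (-(k / (q + 1))) := by gcongr
      _ = 1 := by rw [← exp_add, add_neg_cancel, exp_zero]
  calc (n.choose k : ℝ) ^ 2 * ((q : ℝ) / (q + 1)) ^ (k * k)
      ≤ ((exp 1 * n / k) ^ k) ^ 2 * ((q : ℝ) / (q + 1)) ^ (k * k) := by
        gcongr; exact Nat.choose_le_exp_one_mul_div_pow n k
    _ = ((exp 1 * n / k) ^ 2 * ((q : ℝ) / (q + 1)) ^ k) ^ k := by ring
    _ < 1 := pow_lt_one₀ (by positivity) hround hk.ne'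

theorem four_mul_exp_neg_mul_le_one {L : ℝ} (hL : 8 ≤ L) : 4 * exp (-L) * L ≤ 1 := by
  have hexp : L ^ 2 / 2 ≤ exp L := by
    nlinarith [quadratic_le_exp_of_nonneg (by linarith : 0 ≤ L)]
  rw [exp_neg, mul_assoc, inv_mul_eq_div, mul_div_assoc', div_le_one (exp_pos L)]
  nlinarith

theorem exp_one_mul_div_sq_lt_exp {L : ℝ} {n q k : ℕ} (hL : exp 2 ≤ L)
    (hq : (q : ℝ) ≤ exp (-L) * n) (hn : L + 2 ≤ exp (-L) * n)
    (hk : 2 * exp (-L) * L * n - 1 < k) :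
    (exp 1 * n / k) ^ 2 < exp (k / (q + 1)) := by
  have hL1 : 1 ≤ L := (one_le_exp zero_le_two).trans hL
  have hkpos : (0 : ℝ) < k := by nlinarith
  have hratio : exp 1 * n / k ≤ exp (L - 1) := by
    rw [div_le_iff₀ hkpos]
    calc exp 1 * n = exp (L - 1) * exp (-L) * exp 2 * n := by
          rw [← exp_add, ← exp_add]; ring_nf
      _ ≤ exp (L - 1) * exp (-L) * L * n := by gcongr
      _ ≤ exp (L - 1) * k := by
          rw [mul_assoc, mul_assoc]; gcongr; nlinarith
  have hexponent : 2 * (L - 1) < k / (q + 1) := by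
    rw [lt_div_iff₀ (by positivity)]
    nlinarith
  calc (exp 1 * n / k) ^ 2 ≤ exp (L - 1) ^ 2 := by gcongr
    _ = exp (2 * (L - 1)) := by rw [← exp_nat_mul]; norm_num
    _ < exp (k / (q + 1)) := exp_lt_exp.2 hexponent

/-- Theorem 3(iv): for every small enough `ε > 0` and `n` large enough, if `q ≤ ε n` then
`P(n,q) ≥ (1 - 4 ε ln(1/ε)) n`: Client can ensure a path with at least
`(1 - 4 ε ln(1/ε)) n` edges. -/
theorem stmt8 :
    ∃ ε₀ : ℝ, 0 < ε₀ ∧ ∀ ε : ℝ, 0 < ε → ε < ε₀ →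
      ∃ n₀ : ℕ, ∀ n : ℕ, n₀ < n → ∀ q : ℕ, 0 < q → (q : ℝ) ≤ ε * (n : ℝ) →
        ClientCanForce (Kboard n) q
          (fun C => ∃ (u v : Fin n) (p : (clientGraph C).Walk u v), p.IsPath ∧
            (1 - 4 * ε * Real.log (1 / ε)) * (n : ℝ) ≤ (p.length : ℝ)) := by
  refine ⟨exp (-10), exp_pos _, fun ε hε hε₀ => ?_⟩
  obtain ⟨L, hL, rfl⟩ : ∃ L, 10 < L ∧ ε = exp (-L) :=
    ⟨-log ε, by linarith [(log_lt_iff_lt_exp hε).2 hε₀], by rw [neg_neg, exp_log hε]⟩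
  have hlog : log (1 / exp (-L)) = L := by rw [one_div, ← exp_neg, neg_neg, log_exp]
  have hexp2 : exp 2 < 9 := by
    rw [show (2 : ℝ) = (2 : ℕ) by norm_num, ← exp_one_pow]
    nlinarith [exp_one_lt_three, exp_pos 1]
  refine ⟨⌈(L + 2) / exp (-L)⌉₊, fun n hn q _ hqn => ?_⟩
  have hLn : L + 2 ≤ exp (-L) * n := by
    rw [← div_le_iff₀' (exp_pos _)]
    exact (Nat.le_ceil _).trans (by exact_mod_cast hn.le)
  set k := ⌊2 * exp (-L) * L * n⌋₊
  have hk_lt : 2 * exp (-L) * L * n - 1 < k := Nat.sub_one_lt_floor _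
  have hk_le : (k : ℝ) ≤ 2 * exp (-L) * L * n := Nat.floor_le (by positivity)
  have hsmall := four_mul_exp_neg_mul_le_one (L := L) (by linarith)
  have hk0 : 0 < k := by exact_mod_cast (show (0 : ℝ) < k by nlinarith)
  have h2k : 2 * k ≤ Fintype.card (Fin n) := by
    rw [Fintype.card_fin]; exact_mod_cast (show (2 * k : ℝ) ≤ n by nlinarith)
  refine (clientCanForce_joinsDisjointSets (choose_sq_mul_div_add_one_pow_lt_one hk0
    (exp_one_mul_div_sq_lt_exp (by linarith) hqn hLn hk_lt))).mono fun C hC => ?_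
  obtain ⟨u, v, p, hp, hlen⟩ := hC.exists_isPath h2k
  refine ⟨u, v, p, hp, ?_⟩
  have hlen' : (n : ℝ) + 1 ≤ p.length + 2 * k := by exact_mod_cast (Fintype.card_fin n) ▸ hlen
  rw [hlog]
  nlinarith
end
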